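/- Let H be a Hilbert space, C a finite index set, and (g_c)_{c∈C}, (h_c)_{c∈C} two families of projections on H each summing to the identity: ∑_c g_c = 1 and ∑_c h_c = 1. If ∑_{c∈C} g_c h_c = 1, then g_c = h_c for every c ∈ C. -/

import Mathlib

/-!
Both families are complete orthogonal idempotents: for `c ≠ d` the positivity of the remaining
projections gives `g c ≤ 1 - g d`, hence `g c * g d = 0`. Multiplying `∑ c, g c * h c = 1` by
`g d` on the left then gives `g d = g d * h d`, and by `h d` on the right `h d = g d * h d`.
-/

theorem OrthogonalIdempotents.eq_of_sum_mul_eq_one {R ι : Type*} [Ring R] [Fintype ι]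
    {p q : ι → R} (hp : OrthogonalIdempotents p) (hq : OrthogonalIdempotents q)
    (h : ∑ i, p i * q i = 1) (i : ι) : p i = q i := by
  classical
  have hp_left : p i * q i = p i := by
    simpa [Finset.mul_sum, ← mul_assoc, hp.mul_eq, (hp.idem i).eq] using congr_arg (p i * ·) h
  have hq_right : p i * q i = q i := by
    simpa [Finset.sum_mul, mul_assoc, hq.mul_eq, (hq.idem i).eq] using congr_arg (· * q i) h
  rw [← hp_left, hq_right]

theorem IsStarProjection.completeOrthogonalIdempotents {A ι : Type*} [CStarAlgebra A]
    [PartialOrder A] [StarOrderedRing A] [Fintype ι] {p : ι → A}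
    (hp : ∀ i, IsStarProjection (p i)) (h : ∑ i, p i = 1) :
    CompleteOrthogonalIdempotents p := by
  classical
  refine ⟨⟨fun i => (hp i).isIdempotentElem, fun i j hij => ?_⟩, h⟩
  have hle : p i ≤ 1 - p j := by
    rw [le_sub_iff_add_le, ← h, ← Finset.sum_pair hij]
    exact Finset.sum_le_univ_sum_of_nonneg fun k => (hp k).nonneg
  simpa [mul_sub] using ((hp i).le_iff_mul_eq_left (hp j).one_sub).mp hle

/-- two PVMs with `∑ g_c h_c = 1` coincide. -/
theorem stmt13 {H : Type*} [NormedAddCommGroup H] [InnerProductSpace ℂ H] [CompleteSpace H]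
    {C : Type*} [Fintype C] (g h : C → H →L[ℂ] H)
    (hgsa : ∀ c, IsSelfAdjoint (g c)) (hgidem : ∀ c, g c ∘L g c = g c)
    (hhsa : ∀ c, IsSelfAdjoint (h c)) (hhidem : ∀ c, h c ∘L h c = h c)
    (hgsum : ∑ c, g c = 1) (hhsum : ∑ c, h c = 1)
    (hmix : ∑ c, g c ∘L h c = 1) :
    ∀ c, g c = h c :=
  have hg := IsStarProjection.completeOrthogonalIdempotents (fun c => ⟨hgidem c, hgsa c⟩) hgsum
  have hh := IsStarProjection.completeOrthogonalIdempotents (fun c => ⟨hhidem c, hhsa c⟩) hhsum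
  hg.toOrthogonalIdempotents.eq_of_sum_mul_eq_one hh.toOrthogonalIdempotents hmix
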